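/- Let f, f', g, g' be EC loops in a digital image (X,κ) at a common basepoint such that f is EC homotopic to f' and g is EC homotopic to g', with both homotopies holding the endpoints fixed. Then f * g is EC homotopic to f' * g' holding the endpoints fixed. -/

import Mathlib

/-- 2-adjacency (c₁-adjacency) on the natural numbers / digital intervals. -/
def natAdj (a b : ℕ) : Prop := b = a + 1 ∨ a = b + 1

/-- Digital `(κ,μ)`-continuity of a function between digital images. -/
def DigCont {X Y : Type*} (κ : X → X → Prop) (μ : Y → Y → Prop) (f : X → Y) : Prop :=
  ∀ a b, κ a b → f a = f b ∨ μ (f a) (f b)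

/-- `(2,κ)`-continuity for functions on `ℕ* = {0,1,2,…}` with 2-adjacency. -/
def ECCont {X : Type*} (κ : X → X → Prop) (f : ℕ → X) : Prop :=
  ∀ a b, natAdj a b → f a = f b ∨ κ (f a) (f b)

/-- An eventually constant (EC) path in `(X,κ)`. -/
def IsECPath {X : Type*} (κ : X → X → Prop) (f : ℕ → X) : Prop :=
  ECCont κ f ∧ ∃ N, ∀ n, N ≤ n → f n = f N

/-- `N_f`, the least index after which `f` is constant. -/
noncomputable def ecN {X : Type*} (f : ℕ → X) : ℕ :=
  sInf {m | ∀ n, m ≤ n → f n = f m}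

/-- An EC homotopy from `f` to `g` (each stage is an EC path). -/
def IsECHomotopy {X : Type*} (κ : X → X → Prop) (f g : ℕ → X) (k : ℕ)
    (H : ℕ → ℕ → X) : Prop :=
  (∀ n, H n 0 = f n) ∧ (∀ n, H n k = g n) ∧
  (∀ n s t, s ≤ k → t ≤ k → natAdj s t → H n s = H n t ∨ κ (H n s) (H n t)) ∧
  (∀ t, t ≤ k → IsECPath κ (fun n => H n t))

/-- The EC homotopy `H` from `f` to `g` holds the endpoints fixed. -/
def ECHoldsEnds {X : Type*} (f g : ℕ → X) (k : ℕ) (H : ℕ → ℕ → X) : Prop :=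
  f 0 = g 0 ∧ (∀ t, t ≤ k → H 0 t = f 0) ∧
  ∃ c, ∀ n, c ≤ n → f n = g n ∧ ∀ t, t ≤ k → H n t = f n

/-- `f` and `g` are EC homotopic. -/
def ECHomotopic {X : Type*} (κ : X → X → Prop) (f g : ℕ → X) : Prop :=
  ∃ k H, IsECHomotopy κ f g k H

/-- `f` and `g` are EC homotopic holding the endpoints fixed. -/
def ECHomotopicFix {X : Type*} (κ : X → X → Prop) (f g : ℕ → X) : Prop :=
  ∃ k H, IsECHomotopy κ f g k H ∧ ECHoldsEnds f g k H

/-- The product `f * g` of EC loops. -/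
noncomputable def ecStar {X : Type*} (f g : ℕ → X) : ℕ → X :=
  fun n => if n ≤ ecN f then f n else g (n - ecN f)

/-- An EC loop based at `x₀`: an EC path with `f(0) = f(∞) = x₀`. -/
def IsECLoop {X : Type*} (κ : X → X → Prop) (x₀ : X) (f : ℕ → X) : Prop :=
  IsECPath κ f ∧ f 0 = x₀ ∧ ∃ N, ∀ n, N ≤ n → f n = x₀

/-! Write `f * g` as the concatenation of `f` and `g` at `N_f`. Once `f` has reached
`x₀ = g 0`, the junction can be slid to any later point `M` by a homotopy that moves it one step
per unit of time. Take `M` beyond `N_f`, `N_{f'}` and the point after which the homotopy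
`f ≃ f'` is stationary: there it sits at `x₀ = g 0`, so the two homotopies run side by side,
joined at `M`. Hence `f * g ≃ f ⋆_M g ≃ f' ⋆_M g' ≃ f' * g'`. -/

section

variable {X : Type*} {κ : X → X → Prop}

theorem ECCont.comp {f : ℕ → X} {φ : ℕ → ℕ} (hf : ECCont κ f)
    (hφ : DigCont natAdj natAdj φ) : ECCont κ (f ∘ φ) := by
  intro a b hab
  rcases hφ a b hab with h | h
  · exact Or.inl (congrArg f h)
  · exact hf _ _ h

theorem IsECLoop.apply_of_ecN_le {x₀ : X} {f : ℕ → X} (hf : IsECLoop κ x₀ f) {n : ℕ}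
    (hn : ecN f ≤ n) : f n = x₀ := by
  obtain ⟨⟨-, hN⟩, -, N, hx⟩ := hf
  have hconst : ∀ m, ecN f ≤ m → f m = f (ecN f) := Nat.sInf_mem hN
  rw [hconst n hn, ← hconst (max n N) (by omega), hx _ (le_max_right _ _)]

theorem IsECLoop.of_ecHomotopicFix {x₀ : X} {f f' : ℕ → X} (hf : IsECLoop κ x₀ f)
    (h : ECHomotopicFix κ f f') : IsECLoop κ x₀ f' := by
  obtain ⟨k, H, ⟨-, hk, -, hstage⟩, h0, -, c, hc⟩ := h
  obtain ⟨-, hf0, N, hN⟩ := hf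
  refine ⟨by simpa only [hk] using hstage k le_rfl, h0.symm.trans hf0, max c N, fun n hn => ?_⟩
  rw [← (hc n (by omega)).1, hN n (by omega)]

/-- `f ⋆_M g`: the product `ecStar` with the junction placed at `M` instead of `N_f`. -/
def ecConcat (M : ℕ) (f g : ℕ → X) : ℕ → X :=
  fun n => if n ≤ M then f n else g (n - M)

theorem ecStar_eq_ecConcat (f g : ℕ → X) : ecStar f g = ecConcat (ecN f) f g := rfl

theorem ecConcat_of_le {M n : ℕ} (f g : ℕ → X) (h : n ≤ M) : ecConcat M f g n = f n :=
  if_pos h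

theorem ecConcat_of_lt {M n : ℕ} (f g : ℕ → X) (h : M < n) : ecConcat M f g n = g (n - M) :=
  if_neg (Nat.not_le.2 h)

theorem ecConcat_of_ge {M n : ℕ} {f g : ℕ → X} (hfg : f M = g 0) (h : M ≤ n) :
    ecConcat M f g n = g (n - M) := by
  rcases h.eq_or_lt with rfl | h
  · rw [ecConcat_of_le f g le_rfl, Nat.sub_self, hfg]
  · exact ecConcat_of_lt f g h

theorem ECCont.ecConcat {M : ℕ} {f g : ℕ → X} (hf : ECCont κ f) (hg : ECCont κ g)
    (hfg : f M = g 0) : ECCont κ (ecConcat M f g) := by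
  intro a b hab
  unfold natAdj at hab
  by_cases h : a ≤ M ∧ b ≤ M
  · rw [ecConcat_of_le f g h.1, ecConcat_of_le f g h.2]
    exact hf a b hab
  · rw [ecConcat_of_ge hfg (by omega), ecConcat_of_ge hfg (by omega)]
    exact hg _ _ (by unfold natAdj; omega)

theorem IsECPath.ecConcat {M : ℕ} {f g : ℕ → X} (hf : ECCont κ f) (hg : IsECPath κ g)
    (hfg : f M = g 0) : IsECPath κ (ecConcat M f g) := by
  obtain ⟨hgc, N, hN⟩ := hg
  refine ⟨hf.ecConcat hgc hfg, M + N, fun n hn => ?_⟩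
  rw [ecConcat_of_ge hfg (by omega), ecConcat_of_ge hfg (by omega), Nat.add_sub_cancel_left,
    hN (n - M) (by omega)]

/-- An EC homotopy holding the endpoints fixed, with time running over all of `ℕ` and the
homotopy eventually stationary in time; this spares the bookkeeping of the length `k`. -/
structure IsFixedECHomotopy (κ : X → X → Prop) (f g : ℕ → X) (H : ℕ → ℕ → X) : Prop where
  start : ∀ n, H n 0 = f n
  finish : ∃ k, ∀ t, k ≤ t → ∀ n, H n t = g n
  ecCont_time : ∀ n, ECCont κ (H n)
  isECPath_stage : ∀ t, IsECPath κ (fun n => H n t)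
  base : ∀ t, H 0 t = f 0
  tail : ∃ c, ∀ n, c ≤ n → ∀ t, H n t = f n

theorem ecHomotopicFix_iff {f g : ℕ → X} :
    ECHomotopicFix κ f g ↔ ∃ H, IsFixedECHomotopy κ f g H := by
  constructor
  · rintro ⟨k, H, ⟨h0, hk, hadj, hstage⟩, -, hbase, c, hc⟩
    refine ⟨fun n t => H n (min t k), ⟨fun n => by simpa using h0 n,
      ⟨k, fun t ht n => by simp only [min_eq_right ht, hk]⟩, fun n a b hab => ?_,
      fun t => hstage _ (min_le_right t k), fun t => hbase _ (min_le_right t k),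
      c, fun n hn t => (hc n hn).2 _ (min_le_right t k)⟩⟩
    by_cases h : a ≤ k ∧ b ≤ k
    · simp only [min_eq_left h.1, min_eq_left h.2]
      exact hadj n a b h.1 h.2 hab
    · unfold natAdj at hab
      exact Or.inl (congrArg (H n) (by omega))
  · rintro ⟨H, hH⟩
    obtain ⟨k, hk⟩ := hH.finish
    obtain ⟨c, hc⟩ := hH.tail
    have hg : ∀ n, H n k = g n := hk k le_rfl
    refine ⟨k, H, ⟨hH.start, hg, fun n s t _ _ => hH.ecCont_time n s t,
      fun t _ => hH.isECPath_stage t⟩, ?_, fun t _ => hH.base t, c,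
      fun n hn => ⟨?_, fun t _ => hc n hn t⟩⟩
    · rw [← hg, hH.base]
    · rw [← hg, hc n hn]

theorem ECHomotopicFix.trans {f g h : ℕ → X} (h₁ : ECHomotopicFix κ f g)
    (h₂ : ECHomotopicFix κ g h) : ECHomotopicFix κ f h := by
  obtain ⟨H₁, hH₁⟩ := ecHomotopicFix_iff.1 h₁
  obtain ⟨H₂, hH₂⟩ := ecHomotopicFix_iff.1 h₂
  obtain ⟨k₁, hk₁⟩ := hH₁.finish
  obtain ⟨k₂, hk₂⟩ := hH₂.finish
  obtain ⟨c₁, hc₁⟩ := hH₁.tail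
  obtain ⟨c₂, hc₂⟩ := hH₂.tail
  have hjoin : ∀ n, H₁ n k₁ = H₂ n 0 := fun n => (hk₁ k₁ le_rfl n).trans (hH₂.start n).symm
  refine ecHomotopicFix_iff.2 ⟨fun n => ecConcat k₁ (H₁ n) (H₂ n),
    ⟨fun n => (ecConcat_of_le _ _ (Nat.zero_le _)).trans (hH₁.start n),
    ⟨k₁ + k₂, fun t ht n => ?_⟩, fun n => (hH₁.ecCont_time n).ecConcat (hH₂.ecCont_time n)
    (hjoin n), fun t => ?_, fun t => ?_, max c₁ c₂, fun n hn t => ?_⟩⟩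
  · rw [ecConcat_of_ge (hjoin n) (by omega), hk₂ _ (by omega)]
  all_goals by_cases ht : t ≤ k₁
  · simpa only [ecConcat_of_le _ _ ht] using hH₁.isECPath_stage t
  · simpa only [ecConcat_of_lt _ _ (Nat.lt_of_not_le ht)] using hH₂.isECPath_stage (t - k₁)
  · rw [ecConcat_of_le _ _ ht, hH₁.base]
  · rw [ecConcat_of_lt _ _ (by omega), hH₂.base, ← hk₁ k₁ le_rfl 0, hH₁.base]
  · rw [ecConcat_of_le _ _ ht, hc₁ n (by omega)]
  · rw [ecConcat_of_lt _ _ (by omega), hc₂ n (by omega), ← hk₁ k₁ le_rfl n,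
      hc₁ n (by omega)]

theorem ECHomotopicFix.symm {f g : ℕ → X} (h : ECHomotopicFix κ f g) :
    ECHomotopicFix κ g f := by
  obtain ⟨H, hH⟩ := ecHomotopicFix_iff.1 h
  obtain ⟨k, hk⟩ := hH.finish
  obtain ⟨c, hc⟩ := hH.tail
  have hg : ∀ n, H n k = g n := hk k le_rfl
  refine ecHomotopicFix_iff.2 ⟨fun n t => H n (k - t), ⟨hg,
    ⟨k, fun t ht n => by rw [Nat.sub_eq_zero_of_le ht, hH.start]⟩,
    fun n => (hH.ecCont_time n).comp (φ := fun t => k - t) ?_,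
    fun t => hH.isECPath_stage _, fun t => by rw [hH.base, ← hg, hH.base],
    c, fun n hn t => by rw [hc n hn, ← hg, hc n hn]⟩⟩
  intro a b hab
  unfold natAdj at *
  dsimp only
  omega

theorem ecHomotopicFix_ecConcat_of_le {M M' : ℕ} {f g : ℕ → X} (hf : ECCont κ f)
    (hg : IsECPath κ g) (hfg : ∀ n, M ≤ n → f n = g 0) (hM : M ≤ M') :
    ECHomotopicFix κ (ecConcat M f g) (ecConcat M' f g) := by
  obtain ⟨N, hN⟩ := hg.2
  -- past `M`, `f` is constantly `g 0`, so there the junction point only shifts `g`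
  have hshift : ∀ m n, M ≤ m → M ≤ n → ecConcat m f g n = g (n - m) := by
    intro m n hm hn
    by_cases h : n ≤ m
    · rw [ecConcat_of_le f g h, hfg n hn, Nat.sub_eq_zero_of_le h]
    · exact ecConcat_of_lt f g (by omega)
  have hMt : ∀ t, M ≤ min (M + t) M' := fun t => le_min (Nat.le_add_right M t) hM
  refine ecHomotopicFix_iff.2 ⟨fun n t => ecConcat (min (M + t) M') f g n,
    ⟨fun n => by simp only [Nat.add_zero, min_eq_left hM],
    ⟨M' - M, fun t ht n => by simp only [min_eq_right (show M' ≤ M + t by omega)]⟩,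
    fun n => ?_, fun t => IsECPath.ecConcat hf hg (hfg _ (hMt t)),
    fun t => by simp only [ecConcat_of_le f g (Nat.zero_le _)],
    M' + N, fun n hn t => ?_⟩⟩
  · by_cases hn : M ≤ n
    · have hcomp : (fun t => ecConcat (min (M + t) M') f g n) =
          g ∘ fun t => n - min (M + t) M' := funext fun t => hshift _ _ (hMt t) hn
      rw [hcomp]
      refine hg.1.comp fun a b hab => ?_
      unfold natAdj at *
      omega
    · refine fun a b _ => Or.inl ?_
      beta_reduce
      rw [ecConcat_of_le f g (show n ≤ min (M + a) M' by omega),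
        ecConcat_of_le f g (show n ≤ min (M + b) M' by omega)]
  · rw [hshift _ n (hMt t) (by omega), hshift M n le_rfl (by omega),
      hN (n - min (M + t) M') (by omega), hN (n - M) (by omega)]

theorem IsFixedECHomotopy.ecConcat {M : ℕ} {f f' g g' : ℕ → X} {H₁ H₂ : ℕ → ℕ → X}
    (h₁ : IsFixedECHomotopy κ f f' H₁) (h₂ : IsFixedECHomotopy κ g g' H₂)
    (hjoin : ∀ t, H₁ M t = H₂ 0 t) :
    IsFixedECHomotopy κ (ecConcat M f g) (ecConcat M f' g')
      (fun n t => ecConcat M (H₁ · t) (H₂ · t) n) := by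
  obtain ⟨k₁, hk₁⟩ := h₁.finish
  obtain ⟨k₂, hk₂⟩ := h₂.finish
  obtain ⟨c, hc⟩ := h₂.tail
  refine ⟨fun n => by simp only [h₁.start, h₂.start],
    ⟨max k₁ k₂, fun t ht n => by simp only [hk₁ t (by omega), hk₂ t (by omega)]⟩,
    fun n => ?_, fun t => IsECPath.ecConcat (h₁.isECPath_stage t).1 (h₂.isECPath_stage t)
    (hjoin t), fun t => ?_, M + c + 1, fun n hn t => ?_⟩
  · by_cases hn : n ≤ M
    · simpa only [ecConcat_of_le _ _ hn] using h₁.ecCont_time n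
    · simpa only [ecConcat_of_lt _ _ (Nat.lt_of_not_le hn)] using h₂.ecCont_time (n - M)
  · rw [ecConcat_of_le _ _ (Nat.zero_le M), ecConcat_of_le _ _ (Nat.zero_le M), h₁.base]
  · rw [ecConcat_of_lt _ _ (by omega), ecConcat_of_lt _ _ (by omega), hc _ (by omega)]

end

theorem ec_star_congr_general {X : Type*} (κ : X → X → Prop)
    (x₀ : X) (f f' g g' : ℕ → X)
    (hf : IsECLoop κ x₀ f)
    (hg : IsECLoop κ x₀ g)
    (h1 : ECHomotopicFix κ f f') (h2 : ECHomotopicFix κ g g') :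
    ECHomotopicFix κ (ecStar f g) (ecStar f' g') := by
  have hf' := hf.of_ecHomotopicFix h1
  have hg' := hg.of_ecHomotopicFix h2
  obtain ⟨H₁, hH₁⟩ := ecHomotopicFix_iff.1 h1
  obtain ⟨H₂, hH₂⟩ := ecHomotopicFix_iff.1 h2
  obtain ⟨c, hc⟩ := hH₁.tail
  obtain ⟨M, hfM, hf'M, hcM⟩ : ∃ M, ecN f ≤ M ∧ ecN f' ≤ M ∧ c ≤ M :=
    ⟨max (max (ecN f) (ecN f')) c, by omega⟩
  have hfg : ∀ n, ecN f ≤ n → f n = g 0 :=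
    fun n hn => (hf.apply_of_ecN_le hn).trans hg.2.1.symm
  have hfg' : ∀ n, ecN f' ≤ n → f' n = g' 0 :=
    fun n hn => (hf'.apply_of_ecN_le hn).trans hg'.2.1.symm
  have hjoin : ∀ t, H₁ M t = H₂ 0 t := fun t => by
    rw [hc M hcM, hfg M hfM, hH₂.base]
  rw [ecStar_eq_ecConcat, ecStar_eq_ecConcat]
  exact (ecHomotopicFix_ecConcat_of_le hf.1.1 hg.1 hfg hfM).trans
    ((ecHomotopicFix_iff.2 ⟨_, hH₁.ecConcat hH₂ hjoin⟩).trans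
    (ecHomotopicFix_ecConcat_of_le hf'.1.1 hg'.1 hfg' hf'M).symm)

/-- If `f ≃ f'` and `g ≃ g'` by EC homotopies holding the endpoints
fixed, then `f * g ≃ f' * g'` holding the endpoints fixed. -/
theorem ec_star_congr {X : Type*} (κ : X → X → Prop) (hκ : Symmetric κ)
    (x₀ : X) (f f' g g' : ℕ → X)
    (hf : IsECLoop κ x₀ f) (hf' : IsECLoop κ x₀ f')
    (hg : IsECLoop κ x₀ g) (hg' : IsECLoop κ x₀ g')
    (h1 : ECHomotopicFix κ f f') (h2 : ECHomotopicFix κ g g') :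
    ECHomotopicFix κ (ecStar f g) (ecStar f' g') :=
  ec_star_congr_general κ x₀ f f' g g' hf hg h1 h2
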